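/- The loop fusion law holds for languages: for all languages E of guarded strings and B, C ⊆ At, E^(C) = E^(B∩C) ⋄ E^(C), where L^(B) = ⋃_{n≥0} (B ⋄ L)ⁿ ⋄ (At∖B). -/
import Mathlib


/-- A guarded string over actions `S` and atoms `A`: an initial atom followed by a
list of (action, atom) pairs, representing `α₀p₁α₁⋯pₙαₙ`. -/
abbrev GS (S A : Type*) := A × List (S × A)

variable {S A : Type*}

/-- The last atom of a guarded string. -/
def lastAtom (x : GS S A) : A := ((x.2.map Prod.snd).getLast?).getD x.1

/-- Fusion product of languages of guarded strings:
`(xα) ⋄ (βy) = xαy` when `α = β`, undefined otherwise. -/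
def fprod (L K : Set (GS S A)) : Set (GS S A) :=
  {z | ∃ x ∈ L, ∃ y ∈ K, lastAtom x = y.1 ∧ z = (x.1, x.2 ++ y.2)}

/-- A set of atoms viewed as the language of single-atom guarded strings. -/
def atomsL (B : Set A) : Set (GS S A) := {x | x.1 ∈ B ∧ x.2 = []}

/-- Powers of a language with respect to the fusion product: `L⁰ = At`, `L^{n+1} = Lⁿ ⋄ L`. -/
def fpow (L : Set (GS S A)) : ℕ → Set (GS S A)
  | 0 => atomsL Set.univ
  | n + 1 => fprod (fpow L n) L

/-- Guarded union: `L +_B K = (B ⋄ L) ∪ (B̄ ⋄ K)`. -/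
def gunion (L K : Set (GS S A)) (B : Set A) : Set (GS S A) :=
  fprod (atomsL B) L ∪ fprod (atomsL Bᶜ) K

/-- Guarded iteration: `L^(B) = ⋃_{n≥0} (B ⋄ L)ⁿ ⋄ B̄`. -/
def gloop (L : Set (GS S A)) (B : Set A) : Set (GS S A) :=
  ⋃ n : ℕ, fprod (fpow (fprod (atomsL B) L) n) (atomsL Bᶜ)

lemma lastAtom_fuse {x y : GS S A} (h : lastAtom x = y.1) :
    lastAtom ((x.1, x.2 ++ y.2) : GS S A) = lastAtom y := by
  unfold lastAtom at *
  rcases eq_or_ne y.2 [] with h2 | h2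
  · simp only [h2, List.append_nil, List.map_nil, List.getLast?_nil, Option.getD_none]
    exact h
  · have hne : (y.2.map Prod.snd) ≠ [] := by simpa using h2
    obtain ⟨a, ha⟩ := Option.isSome_iff_exists.mp (List.getLast?_isSome.mpr hne)
    simp only [List.map_append, List.getLast?_append_of_ne_nil _ hne, ha, Option.getD_some]

lemma fprod_assoc (L K M : Set (GS S A)) : fprod (fprod L K) M = fprod L (fprod K M) := by
  ext z
  constructor
  · rintro ⟨x, ⟨u, hu, v, hv, huv, rfl⟩, w, hw, hxw, rfl⟩
    refine ⟨u, hu, (v.1, v.2 ++ w.2), ⟨v, hv, w, hw, ?_, rfl⟩, ?_, ?_⟩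
    · rw [← hxw]; exact (lastAtom_fuse huv).symm
    · simpa using huv
    · simp [List.append_assoc]
  · rintro ⟨u, hu, x, ⟨v, hv, w, hw, hvw, rfl⟩, hux, rfl⟩
    refine ⟨(u.1, u.2 ++ v.2), ⟨u, hu, v, hv, by simpa using hux, rfl⟩, w, hw, ?_, ?_⟩
    · rw [lastAtom_fuse (by simpa using hux)]; exact hvw
    · simp [List.append_assoc]

lemma fprod_unit_left (L : Set (GS S A)) : fprod (atomsL Set.univ) L = L := by
  ext z
  constructor
  · rintro ⟨x, ⟨-, hx2⟩, y, hy, hxy, rfl⟩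
    have hx1 : x.1 = y.1 := by simpa [lastAtom, hx2] using hxy
    have : ((x.1, x.2 ++ y.2) : GS S A) = y := by rw [hx2, hx1]; simp
    rw [this]; exact hy
  · intro hz
    exact ⟨(z.1, []), ⟨trivial, rfl⟩, z, hz, by simp [lastAtom], by simp⟩

lemma fprod_unit_right (L : Set (GS S A)) : fprod L (atomsL Set.univ) = L := by
  ext z
  constructor
  · rintro ⟨x, hx, y, ⟨-, hy2⟩, hxy, rfl⟩
    simpa [hy2] using hx
  · intro hz
    exact ⟨z, hz, (lastAtom z, []), ⟨trivial, rfl⟩, rfl, by simp⟩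

lemma fpow_succ_left (L : Set (GS S A)) (n : ℕ) :
    fpow L (n + 1) = fprod L (fpow L n) := by
  induction n with
  | zero => show fprod (fpow L 0) L = _; rw [show fpow L 0 = atomsL Set.univ from rfl,
      fprod_unit_left, fprod_unit_right]
  | succ n ih =>
    show fprod (fpow L (n+1)) L = fprod L (fpow L (n+1))
    conv_lhs => rw [ih]
    rw [fprod_assoc]
    rfl

lemma fprod_mono {L L' K K' : Set (GS S A)} (hL : L ⊆ L') (hK : K ⊆ K') :
    fprod L K ⊆ fprod L' K' := by
  rintro z ⟨x, hx, y, hy, h, rfl⟩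
  exact ⟨x, hL hx, y, hK hy, h, rfl⟩

lemma fpow_mono {L L' : Set (GS S A)} (h : L ⊆ L') (n : ℕ) : fpow L n ⊆ fpow L' n := by
  induction n with
  | zero => exact subset_rfl
  | succ n ih => exact fprod_mono ih h

lemma fpow_add (L : Set (GS S A)) (m n : ℕ) :
    fpow L (m + n) = fprod (fpow L m) (fpow L n) := by
  induction n with
  | zero => rw [Nat.add_zero, show fpow L 0 = atomsL Set.univ from rfl, fprod_unit_right]
  | succ n ih =>
    show fprod (fpow L (m + n)) L = fprod (fpow L m) (fprod (fpow L n) L)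
    rw [ih, fprod_assoc]

lemma mem_fprod_atomsL_right {L : Set (GS S A)} {D : Set A} {z : GS S A} :
    z ∈ fprod L (atomsL D) ↔ z ∈ L ∧ lastAtom z ∈ D := by
  constructor
  · rintro ⟨x, hx, y, ⟨hy1, hy2⟩, hxy, rfl⟩
    have : ((x.1, x.2 ++ y.2) : GS S A) = x := by rw [hy2]; simp
    rw [this]
    exact ⟨hx, hxy ▸ hy1⟩
  · rintro ⟨hz, hl⟩
    exact ⟨z, hz, (lastAtom z, []), ⟨hl, rfl⟩, rfl, by simp⟩

lemma mem_gloop_iff {L : Set (GS S A)} {D : Set A} {z : GS S A} :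
    z ∈ gloop L D ↔ ∃ n, z ∈ fpow (fprod (atomsL D) L) n ∧ lastAtom z ∈ Dᶜ := by
  simp only [gloop, Set.mem_iUnion, mem_fprod_atomsL_right]

lemma atom_mem_gloop {L : Set (GS S A)} {D : Set A} {α : A} (h : α ∈ Dᶜ) :
    ((α, []) : GS S A) ∈ gloop L D :=
  mem_gloop_iff.mpr ⟨0, ⟨trivial, rfl⟩, by simpa [lastAtom] using h⟩

lemma cons_mem_gloop {L : Set (GS S A)} {D : Set A} {e x : GS S A}
    (he : e ∈ fprod (atomsL D) L) (hx : x ∈ gloop L D) (h : lastAtom e = x.1) :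
    ((e.1, e.2 ++ x.2) : GS S A) ∈ gloop L D := by
  obtain ⟨m, hm, hl⟩ := mem_gloop_iff.mp hx
  refine mem_gloop_iff.mpr ⟨m + 1, ?_, ?_⟩
  · rw [fpow_succ_left]
    exact ⟨e, he, x, hm, h, rfl⟩
  · rw [lastAtom_fuse h]; exact hl

theorem gloop_fusion [Fintype S] [Fintype A] [Nonempty S] [Nonempty A]
    (E : Set (GS S A)) (B C : Set A) :
    gloop E C = fprod (gloop E (B ∩ C)) (gloop E C) := by
  apply Set.Subset.antisymm
  · intro z hz
    obtain ⟨n, hzn, hzl⟩ := mem_gloop_iff.mp hz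
    have key : ∀ n, ∀ z : GS S A, z ∈ fpow (fprod (atomsL C) E) n → lastAtom z ∈ Cᶜ →
        z ∈ fprod (gloop E (B ∩ C)) (gloop E C) := by
      intro n
      induction n with
      | zero =>
        rintro ⟨z1, z2⟩ ⟨-, rfl⟩ hl
        have hz1 : z1 ∈ Cᶜ := by simpa [lastAtom] using hl
        exact ⟨(z1, []), atom_mem_gloop (fun h => hz1 h.2), (z1, []),
          atom_mem_gloop hz1, by simp [lastAtom], by simp⟩
      | succ n ih =>
        intro z hz hl
        by_cases hz1 : z.1 ∈ B ∩ C
        · rw [fpow_succ_left] at hz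
          obtain ⟨e, he, w, hw, hew, rfl⟩ := hz
          have hwl : lastAtom w ∈ Cᶜ := by rwa [lastAtom_fuse hew] at hl
          obtain ⟨x, hx, y, hy, hxy, hweq⟩ := ih w hw hwl
          have heM : e ∈ fprod (atomsL (B ∩ C)) E := by
            obtain ⟨a, ⟨-, ha2⟩, f, hf, haf, rfl⟩ := he
            exact ⟨a, ⟨hz1, ha2⟩, f, hf, haf, rfl⟩
          have hex : lastAtom e = x.1 := by rw [hew, hweq]
          refine ⟨(e.1, e.2 ++ x.2), cons_mem_gloop heM hx hex, y, hy, ?_, ?_⟩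
          · rw [show lastAtom ((e.1, e.2 ++ x.2) : GS S A) = lastAtom x from lastAtom_fuse hex]
            exact hxy
          · rw [hweq]; simp [List.append_assoc]
        · refine ⟨(z.1, []), atom_mem_gloop hz1, z, mem_gloop_iff.mpr ⟨n + 1, hz, hl⟩, ?_, ?_⟩
          · simp [lastAtom]
          · simp
    exact key n z hzn hzl
  · rintro z ⟨x, hx, y, hy, hxy, rfl⟩
    obtain ⟨m, hm, -⟩ := mem_gloop_iff.mp hx
    obtain ⟨n, hn, hyl⟩ := mem_gloop_iff.mp hy
    refine mem_gloop_iff.mpr ⟨m + n, ?_, ?_⟩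
    · rw [fpow_add]
      refine ⟨x, ?_, y, hn, hxy, rfl⟩
      refine fpow_mono (fprod_mono ?_ subset_rfl) m hm
      intro a ha
      exact ⟨ha.1.2, ha.2⟩
    · rw [lastAtom_fuse hxy]; exact hyl
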